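/- As n → ∞ one has K_n = 2π·(n/(4e))^n·(n/2)^{u-1}·(1+o(1)); equivalently, K_n / (2π·(n/(4e))^n·(n/2)^{u-1}) converges to 1. -/

import Mathlib

set_option maxHeartbeats 1600000

open Complex ComplexConjugate Filter Topology MeasureTheory Set

noncomputable section

/-- The normalizing sequence `K_n`. -/
def Kseq (a b c d : ℂ) (u : ℝ) (n : ℕ) : ℂ :=
  (Complex.Gamma (((n : ℂ) + 1) / 2) * Complex.Gamma (((n : ℂ) + 2 * (u : ℂ) - 1) / 2) *
    Complex.Gamma (((n : ℂ) + a + c) / 2) * Complex.Gamma (((n : ℂ) + a + d) / 2) *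
    Complex.Gamma (((n : ℂ) + b + c) / 2) * Complex.Gamma (((n : ℂ) + b + d) / 2)) /
  ((2 : ℂ) ^ n * Complex.Gamma (((n : ℂ) + (u : ℂ) - 1 / 2) / 2) *
    Complex.Gamma (((n : ℂ) + (u : ℂ)) / 2) ^ 2 *
    Complex.Gamma (((n : ℂ) + (u : ℂ) + 1 / 2) / 2))

namespace Stmt7Aux

def Jfun (w : ℂ) (n : ℕ) : ℝ → ℂ :=
  indicator (Ioc 0 ((n:ℝ)/2)) fun y : ℝ =>
    (((1 - y/((n:ℝ)/2)) ^ (((n:ℝ)/2) - 1) : ℝ) : ℂ) * (y:ℂ) ^ (w - 1)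

theorem Jfun_tendsto {w : ℂ} (hw : 0 < w.re) :
    Tendsto (fun n : ℕ => ∫ y : ℝ in Ioi 0, Jfun w n y) atTop (𝓝 (Complex.Gamma w)) := by
  rw [Complex.Gamma_eq_integral hw]
  have hr : Tendsto (fun n : ℕ => (n:ℝ)/2) atTop atTop :=
    (tendsto_natCast_atTop_atTop (R := ℝ)).atTop_div_const (by norm_num)
  refine tendsto_integral_filter_of_dominated_convergence
      (fun y => y ^ (w.re - 1) * Real.exp (-(1/2) * y)) ?_ ?_ ?_ ?_
  · -- measurability
    refine Eventually.of_forall fun n => ?_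
    refine (AEStronglyMeasurable.indicator ?_ measurableSet_Ioc)
    apply Measurable.aestronglyMeasurable
    measurability
  · -- domination
    filter_upwards [hr.eventually_ge_atTop 2] with n hn
    rw [ae_restrict_iff' measurableSet_Ioi]
    filter_upwards with y hy
    simp only [Jfun]
    rcases lt_or_ge ((n:ℝ)/2) y with hxy | hxy
    · rw [indicator_of_notMem (notMem_Ioc_of_gt hxy), norm_zero]
      have hy0 : (0:ℝ) < y := hy
      exact mul_nonneg (Real.rpow_nonneg hy0.le _) (Real.exp_pos _).le
    · set r := (n:ℝ)/2
      have hy0 : (0:ℝ) < y := hy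
      have hb0 : 0 ≤ 1 - y / r := by
        rw [sub_nonneg]; exact div_le_one_of_le₀ hxy (by positivity)
      rw [indicator_of_mem (mem_Ioc.mpr ⟨hy0, hxy⟩), norm_mul, Complex.norm_real,
        Real.norm_eq_abs,
        Complex.norm_cpow_eq_rpow_re_of_pos hy0, sub_re, one_re,
        _root_.abs_of_nonneg (Real.rpow_nonneg hb0 _),
        mul_comm ((1 - y / r) ^ (r - 1)) _]
      refine mul_le_mul_of_nonneg_left ?_ (Real.rpow_nonneg hy0.le _)
      calc (1 - y/r) ^ (r - 1)
          ≤ (Real.exp (-(y/r))) ^ (r - 1) := by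
            refine Real.rpow_le_rpow hb0 ?_ (by linarith)
            have := Real.add_one_le_exp (-(y/r)); linarith
        _ = Real.exp (-(y/r) * (r - 1)) := by
            rw [← Real.exp_log (Real.exp_pos _), Real.log_exp,
              ← Real.exp_mul]
        _ ≤ Real.exp (-(1/2) * y) := by
            apply Real.exp_le_exp.mpr
            have hr0 : (0:ℝ) < r := by linarith
            have key : y/2 ≤ y / r * (r - 1) := by
              rw [div_mul_eq_mul_div, le_div_iff₀ hr0]; nlinarith
            nlinarith
  · -- integrability of the bound
    have hI := integrableOn_rpow_mul_exp_neg_mul_rpow (p := 1) (s := w.re - 1) (b := 1/2)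
      (by linarith) zero_lt_one (by norm_num)
    exact hI.congr_fun (fun x hx => by dsimp only; rw [Real.rpow_one]) measurableSet_Ioi
  · -- pointwise convergence
    filter_upwards [ae_restrict_mem measurableSet_Ioi] with y hy
    have hy0 : (0:ℝ) < y := hy
    have hev : ∀ᶠ n : ℕ in atTop, Jfun w n y
        = (((1 - y/((n:ℝ)/2)) ^ (((n:ℝ)/2) - 1) : ℝ) : ℂ) * (y:ℂ) ^ (w - 1) := by
      filter_upwards [hr.eventually_ge_atTop y] with n hn
      exact indicator_of_mem (mem_Ioc.mpr ⟨hy0, hn⟩) _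
    rw [show (↑(Real.exp (-y)) * (y:ℂ) ^ (w-1)) = ((Real.exp (-y) : ℝ):ℂ) * (y:ℂ)^(w-1) by norm_num]
    refine Tendsto.congr' (EventuallyEq.symm hev) ?_
    refine Tendsto.mul_const _ ((Complex.continuous_ofReal.tendsto _).comp ?_)
    -- real limit: (1 - y/r_n) ^ (r_n - 1) → exp (-y)
    have hx1 : Tendsto (fun x : ℝ => (1 - y/x) ^ (x - 1)) atTop (𝓝 (Real.exp (-y))) := by
      have hbase : Tendsto (fun x : ℝ => 1 - y/x) atTop (𝓝 1) := by
        simpa [div_eq_mul_inv] using ((tendsto_inv_atTop_zero (𝕜 := ℝ)).const_mul y).const_sub 1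
      have hmain := Real.tendsto_one_add_div_rpow_exp (-y)
      have h2 : Tendsto (fun x : ℝ => (1 - y/x) ^ x) atTop (𝓝 (Real.exp (-y))) := by
        refine Tendsto.congr' ?_ hmain
        filter_upwards with x
        rw [neg_div, ← sub_eq_add_neg]
      have h3 : Tendsto (fun x : ℝ => (1 - y/x) ^ x / (1 - y/x)) atTop
          (𝓝 (Real.exp (-y) / 1)) := h2.div hbase one_ne_zero
      rw [div_one] at h3
      refine Tendsto.congr' ?_ h3
      filter_upwards [eventually_gt_atTop (max 0 y)] with x hx
      have hx0 : 0 < x := lt_of_le_of_lt (le_max_left _ _) hx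
      have hpos : 0 < 1 - y/x := by
        rw [sub_pos]; exact (div_lt_one hx0).mpr (lt_of_le_of_lt (le_max_right _ _) hx)
      rw [Real.rpow_sub hpos, Real.rpow_one]
    exact hx1.comp hr
theorem Jfun_eq {w : ℂ} (hw : 0 < w.re) {n : ℕ} (hn : n ≠ 0) :
    ((n:ℂ)/2) ^ w * Complex.betaIntegral ((n:ℂ)/2) w = ∫ y : ℝ in Ioi 0, Jfun w n y := by
  have hr : (0:ℝ) < (n:ℝ)/2 := by
    have : (0:ℝ) < (n:ℝ) := Nat.cast_pos.mpr (Nat.pos_of_ne_zero hn)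
    linarith
  set r : ℝ := (n:ℝ)/2 with hrdef
  have hrc : ((n:ℂ)/2) = (r:ℂ) := by push_cast [hrdef]; ring
  have hrc0 : (r:ℂ) ≠ 0 := by
    simpa using ofReal_ne_zero.mpr hr.ne'
  -- right side as interval integral
  have h1 : (∫ y : ℝ in Ioi 0, Jfun w n y)
      = ∫ y : ℝ in (0:ℝ)..r, (((1 - y/r) ^ (r - 1) : ℝ) : ℂ) * (y:ℂ) ^ (w - 1) := by
    rw [Jfun, MeasureTheory.integral_indicator measurableSet_Ioc,
      intervalIntegral.integral_of_le hr.le,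
      Measure.restrict_restrict_of_subset Ioc_subset_Ioi_self]
  rw [h1]
  -- change of variables
  have hcv := intervalIntegral.integral_comp_div (a := 0) (b := r)
    (fun x : ℝ => (((1 - x) ^ (r - 1) : ℝ) : ℂ) * ((x * r : ℝ):ℂ) ^ (w - 1)) hr.ne'
  have h2 : (fun y : ℝ => (((1 - y/r) ^ (r - 1) : ℝ) : ℂ)
        * ((y / r * r : ℝ):ℂ) ^ (w - 1))
      = fun y : ℝ => (((1 - y/r) ^ (r - 1) : ℝ) : ℂ) * ((y:ℝ):ℂ) ^ (w - 1) := by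
    funext y; rw [div_mul_cancel₀ _ hr.ne']
  rw [h2] at hcv
  rw [hcv, zero_div, div_self hr.ne']
  -- now compute the 0..1 integral
  rw [Complex.betaIntegral_symm, Complex.betaIntegral, real_smul,
    ← intervalIntegral.integral_const_mul, ← intervalIntegral.integral_const_mul]
  simp_rw [intervalIntegral.integral_of_le zero_le_one]
  refine setIntegral_congr_fun measurableSet_Ioc fun x hx => ?_
  have hx0 : 0 ≤ x := le_of_lt hx.1
  have hx1 : 0 ≤ 1 - x := by linarith [hx.2]
  have hA : ((x * r : ℝ):ℂ) ^ (w - 1) = (x:ℂ) ^ (w - 1) * (r:ℂ) ^ (w - 1) := by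
    rw [ofReal_mul]
    exact mul_cpow_ofReal_nonneg hx0 hr.le _
  have hB : (((1 - x) ^ (r - 1) : ℝ) : ℂ) = ((1 - x : ℝ):ℂ) ^ ((n:ℂ)/2 - 1) := by
    rw [ofReal_cpow hx1, hrc]; push_cast; ring_nf
  have hC : ((n:ℂ)/2) ^ w = (r:ℂ) * (r:ℂ) ^ (w - 1) := by
    rw [hrc]
    conv_lhs => rw [show w = w - 1 + 1 by ring]
    rw [cpow_add _ _ hrc0, cpow_one]
    ring
  rw [hA, hB, hC]
  push_cast
  ring
def gratio (w : ℂ) (n : ℕ) : ℂ :=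
  Complex.Gamma ((n:ℂ)/2 + w) / (Complex.Gamma ((n:ℂ)/2) * ((n:ℂ)/2) ^ w)

theorem nhalf_re (n : ℕ) : ((n:ℂ)/2).re = (n:ℝ)/2 := by
  simp [Complex.div_re]

theorem Gamma_ne_zero_of_re_pos' {s : ℂ} (hs : 0 < s.re) : Complex.Gamma s ≠ 0 := by
  apply Complex.Gamma_ne_zero
  intro m hm
  rw [hm] at hs
  simp only [neg_re, natCast_re] at hs
  have : (0:ℝ) ≤ m := Nat.cast_nonneg m
  linarith

theorem beta_lim {w : ℂ} (hw : 0 < w.re) :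
    Tendsto (fun n : ℕ => ((n:ℂ)/2) ^ w * Complex.betaIntegral ((n:ℂ)/2) w) atTop
      (𝓝 (Complex.Gamma w)) := by
  refine Tendsto.congr' ?_ (Jfun_tendsto hw)
  filter_upwards [eventually_ne_atTop 0] with n hn
  exact (Jfun_eq hw hn).symm

theorem gratio_tendsto_of_pos {w : ℂ} (hw : 0 < w.re) :
    Tendsto (gratio w) atTop (𝓝 1) := by
  have hΓw : Complex.Gamma w ≠ 0 := Gamma_ne_zero_of_re_pos' hw
  have h := (beta_lim hw)
  have h2 : Tendsto (fun n : ℕ => Complex.Gamma w / (((n:ℂ)/2) ^ w *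
      Complex.betaIntegral ((n:ℂ)/2) w)) atTop (𝓝 (Complex.Gamma w / Complex.Gamma w)) :=
    tendsto_const_nhds.div h hΓw
  rw [div_self hΓw] at h2
  refine Tendsto.congr' ?_ h2
  filter_upwards [eventually_ge_atTop 1] with n hn
  have hnre : 0 < ((n:ℂ)/2).re := by
    rw [nhalf_re]
    have : (1:ℝ) ≤ (n:ℝ) := by exact_mod_cast hn
    linarith
  have hbeta := Complex.Gamma_mul_Gamma_eq_betaIntegral hnre hw
  have hΓr : Complex.Gamma ((n:ℂ)/2) ≠ 0 := Gamma_ne_zero_of_re_pos' hnre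
  have hΓrw : Complex.Gamma ((n:ℂ)/2 + w) ≠ 0 := by
    apply Gamma_ne_zero_of_re_pos'
    rw [add_re]; linarith
  have hB : Complex.betaIntegral ((n:ℂ)/2) w ≠ 0 := by
    intro h0
    rw [h0, mul_zero] at hbeta
    exact (mul_ne_zero hΓr hΓw) hbeta
  have hpw : ((n:ℂ)/2) ^ w ≠ 0 := by
    intro h0
    rcases (cpow_eq_zero_iff _ _).mp h0 with ⟨h1, -⟩
    rw [h1] at hnre
    simp at hnre
  rw [gratio, div_eq_div_iff (mul_ne_zero hpw hB) (mul_ne_zero hΓr hpw)]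
  linear_combination ((n:ℂ)/2) ^ w * hbeta


theorem aux_inv_tendsto : Tendsto (fun n : ℕ => ((n:ℂ)/2)⁻¹) atTop (𝓝 0) := by
  have h : Tendsto (fun n : ℕ => (((n:ℝ)/2)⁻¹ : ℝ)) atTop (𝓝 0) := by
    apply Tendsto.inv_tendsto_atTop
    exact (tendsto_natCast_atTop_atTop (R := ℝ)).atTop_div_const (by norm_num)
  have h3 : Tendsto (fun n : ℕ => ((((n:ℝ)/2)⁻¹ : ℝ) : ℂ)) atTop (𝓝 0) := by
    rw [show ((0:ℂ)) = ((0:ℝ):ℂ) by norm_num]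
    exact (Complex.continuous_ofReal.tendsto _).comp h
  refine h3.congr fun n => ?_
  push_cast
  ring

theorem ev_re_pos (w : ℂ) : ∀ᶠ n : ℕ in atTop, 0 < ((n:ℂ)/2 + w).re := by
  have h : Tendsto (fun n : ℕ => (n:ℝ)/2 + w.re) atTop atTop :=
    ((tendsto_natCast_atTop_atTop (R := ℝ)).atTop_div_const (by norm_num)).atTop_add
      tendsto_const_nhds
  filter_upwards [h.eventually_gt_atTop 0] with n hn
  have : ((n:ℂ)/2 + w).re = (n:ℝ)/2 + w.re := by
    simp [Complex.add_re, Complex.div_re]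
  rw [this]
  exact hn

theorem ev_ne (w : ℂ) : ∀ᶠ n : ℕ in atTop, ((n:ℂ)/2 + w) ≠ 0 := by
  filter_upwards [ev_re_pos w] with n hn h0
  rw [h0] at hn
  simp at hn

theorem ratio_tendsto (w : ℂ) :
    Tendsto (fun n : ℕ => ((n:ℂ)/2) / ((n:ℂ)/2 + w)) atTop (𝓝 1) := by
  have h0 : Tendsto (fun n : ℕ => (1 : ℂ) + w * ((n:ℂ)/2)⁻¹) atTop (𝓝 1) := by
    simpa using (aux_inv_tendsto.const_mul w).const_add 1
  have h1 : Tendsto (fun n : ℕ => ((1 : ℂ) + w * ((n:ℂ)/2)⁻¹)⁻¹) atTop (𝓝 1) := by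
    simpa using h0.inv₀ one_ne_zero
  refine Tendsto.congr' ?_ h1
  filter_upwards [ev_ne w, eventually_ge_atTop 1] with n hrw0 hn1
  have hr0 : ((n:ℂ)/2) ≠ 0 := by
    simp only [ne_eq, div_eq_zero_iff]
    push_neg
    exact ⟨by exact_mod_cast Nat.one_le_iff_ne_zero.mp hn1, by norm_num⟩
  have hn0 : (n:ℂ) ≠ 0 := by
    exact_mod_cast Nat.one_le_iff_ne_zero.mp hn1
  have key : ((n:ℂ)/2 + w) = ((n:ℂ)/2) * ((1:ℂ) + w * ((n:ℂ)/2)⁻¹) := by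
    field_simp
  rw [key, div_mul_eq_div_div, div_self hr0, one_div]

theorem gratio_step {w : ℂ} (h : Tendsto (gratio (w+1)) atTop (𝓝 1)) :
    Tendsto (gratio w) atTop (𝓝 1) := by
  have hlim := h.mul (ratio_tendsto w)
  rw [mul_one] at hlim
  refine Tendsto.congr' ?_ hlim
  filter_upwards [ev_ne w, eventually_ge_atTop 1] with n hrw0 hn1
  have hr0 : ((n:ℂ)/2) ≠ 0 := by
    simp only [ne_eq, div_eq_zero_iff]
    push_neg
    exact ⟨by exact_mod_cast Nat.one_le_iff_ne_zero.mp hn1, by norm_num⟩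
  have hΓ1 : Complex.Gamma ((n:ℂ)/2 + (w+1)) = ((n:ℂ)/2 + w) * Complex.Gamma ((n:ℂ)/2 + w) := by
    rw [← add_assoc]
    exact Complex.Gamma_add_one _ hrw0
  have hpow : ((n:ℂ)/2) ^ (w+1) = ((n:ℂ)/2) ^ w * ((n:ℂ)/2) := by
    rw [cpow_add _ _ hr0, cpow_one]
  have hnre : 0 < ((n:ℂ)/2).re := by
    rw [nhalf_re]
    have : (1:ℝ) ≤ (n:ℝ) := by exact_mod_cast hn1
    linarith
  have hΓr : Complex.Gamma ((n:ℂ)/2) ≠ 0 := Gamma_ne_zero_of_re_pos' hnre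
  have hpw : ((n:ℂ)/2) ^ w ≠ 0 := by
    intro h0
    exact hr0 ((cpow_eq_zero_iff _ _).mp h0).1
  rw [gratio, gratio, hΓ1, hpow, div_mul_div_comm,
    div_eq_div_iff (by exact mul_ne_zero (mul_ne_zero hΓr (mul_ne_zero hpw hr0)) hrw0)
      (by exact mul_ne_zero hΓr hpw)]
  ring

theorem gratio_tendsto (w : ℂ) : Tendsto (gratio w) atTop (𝓝 1) := by
  obtain ⟨m, hm⟩ := exists_nat_gt (-w.re)
  have key : ∀ m : ℕ, ∀ w : ℂ, 0 < (w + m).re → Tendsto (gratio w) atTop (𝓝 1) := by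
    intro m
    induction m with
    | zero => intro w hw; exact gratio_tendsto_of_pos (by simpa using hw)
    | succ k ih =>
      intro w hw
      apply gratio_step
      apply ih
      simp only [add_re, natCast_re, one_re] at hw ⊢
      push_cast at hw ⊢
      linarith
  refine key (m+1) w ?_
  simp only [add_re, natCast_re]
  push_cast
  linarith
theorem ev_gratio_ne (w : ℂ) : ∀ᶠ n : ℕ in atTop, gratio w n ≠ 0 := by
  exact (gratio_tendsto w).eventually_ne one_ne_zero

theorem stirling_part : Tendsto (fun n : ℕ =>
    (Complex.Gamma ((n:ℂ)/2))^2 * ((n:ℂ)/2) /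
      ((2:ℂ)^n * (2 * (Real.pi:ℂ) * ((n:ℂ)/(4*(Real.exp 1:ℂ)))^n))) atTop (𝓝 1) := by
  have hπ : (0:ℝ) < Real.pi := Real.pi_pos
  have hsqπ : ((Real.sqrt Real.pi : ℝ):ℂ) ≠ 0 := by
    simp only [ne_eq, ofReal_eq_zero]
    exact Real.sqrt_ne_zero'.mpr hπ
  -- limit of the model sequence
  have hmodel : Tendsto (fun n : ℕ =>
      ((Stirling.stirlingSeq n : ℝ):ℂ) / (gratio (1/2) n * ((Real.sqrt Real.pi : ℝ):ℂ)))
      atTop (𝓝 1) := by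
    have h1 : Tendsto (fun n : ℕ => ((Stirling.stirlingSeq n : ℝ):ℂ)) atTop
        (𝓝 ((Real.sqrt Real.pi : ℝ):ℂ)) :=
      (Complex.continuous_ofReal.tendsto _).comp Stirling.tendsto_stirlingSeq_sqrt_pi
    have h2 : Tendsto (fun n : ℕ => gratio (1/2) n * ((Real.sqrt Real.pi : ℝ):ℂ)) atTop
        (𝓝 ((Real.sqrt Real.pi : ℝ):ℂ)) := by
      simpa using (gratio_tendsto (1/2)).mul_const ((Real.sqrt Real.pi : ℝ):ℂ)
    have := h1.div h2 hsqπ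
    rw [div_self hsqπ] at this
    exact this
  refine Tendsto.congr' ?_ hmodel
  filter_upwards [eventually_ge_atTop 1, ev_gratio_ne (1/2)] with n hn1 hg0
  have hnR : (0:ℝ) < (n:ℝ) := by exact_mod_cast Nat.lt_of_lt_of_le Nat.zero_lt_one hn1
  have hnC : ((n:ℂ)) ≠ 0 := by exact_mod_cast hnR.ne'
  have hrC : ((n:ℂ)/2) ≠ 0 := by simp [hnC]
  have hnre : 0 < ((n:ℂ)/2).re := by rw [nhalf_re]; linarith
  have hΓr : Complex.Gamma ((n:ℂ)/2) ≠ 0 := Gamma_ne_zero_of_re_pos' hnre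
  set ec : ℂ := ((Real.exp 1 : ℝ) : ℂ) with hec
  have hecne : ec ≠ 0 := by
    rw [hec]; exact_mod_cast (Real.exp_pos 1).ne'
  set p : ℂ := ((Real.sqrt Real.pi : ℝ):ℂ) with hp
  set s : ℂ := ((Real.sqrt ((n:ℝ)/2) : ℝ):ℂ) with hs
  have hsne : s ≠ 0 := by
    rw [hs]
    simp only [ne_eq, ofReal_eq_zero]
    positivity
  set t : ℂ := (2:ℂ)^n with ht
  have htne : t ≠ 0 := by rw [ht]; exact pow_ne_zero _ two_ne_zero
  set g : ℂ := gratio (1/2) n with hgdef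
  -- (F6) r^(1/2) = s
  have hhalf : ((n:ℂ)/2) ^ (1/2 : ℂ) = s := by
    rw [hs, show ((n:ℂ)/2) = (((n:ℝ)/2 : ℝ):ℂ) by push_cast; ring,
      show ((1/2 : ℂ)) = ((1/2 : ℝ):ℂ) by norm_num,
      ← Complex.ofReal_cpow (by positivity), Real.sqrt_eq_rpow]
  -- (F5) Gamma (r + 1/2) = g * (Gamma r * s)
  have hF5 : Complex.Gamma ((n:ℂ)/2 + 1/2) = g * (Complex.Gamma ((n:ℂ)/2) * s) := by
    rw [hgdef, gratio, hhalf, div_mul_cancel₀]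
    exact mul_ne_zero hΓr hsne
  -- duplication + functional equation: key identity
  have hdup := Complex.Gamma_mul_Gamma_add_half ((n:ℂ)/2)
  rw [show (2 * ((n:ℂ)/2)) = (n:ℂ) by ring] at hdup
  have hΓn : Complex.Gamma ((n:ℂ)) = ((n-1).factorial : ℂ) := by
    rw [show ((n:ℂ)) = ((n-1 : ℕ):ℂ) + 1 by
      push_cast [Nat.cast_sub hn1]; ring]
    exact Complex.Gamma_nat_eq_factorial _
  have hpow2 : (2:ℂ) ^ ((1:ℂ) - (n:ℂ)) * t = 2 := by
    rw [ht, ← cpow_natCast (2:ℂ) n, ← cpow_add _ _ (two_ne_zero)]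
    norm_num
  rw [hΓn] at hdup
  have hkey : (Complex.Gamma ((n:ℂ)/2))^2 * g * s * t = ((n-1).factorial : ℂ) * 2 * p := by
    have := congrArg (fun z => z * t) hdup
    rw [hF5] at this
    calc (Complex.Gamma ((n:ℂ)/2))^2 * g * s * t
        = Complex.Gamma ((n:ℂ)/2) * (g * (Complex.Gamma ((n:ℂ)/2) * s)) * t := by ring
      _ = ((n-1).factorial : ℂ) * 2^((1:ℂ)-(n:ℂ)) * p * t := by rw [this]
      _ = ((n-1).factorial : ℂ) * p * (2^((1:ℂ)-(n:ℂ)) * t) := by ring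
      _ = ((n-1).factorial : ℂ) * 2 * p := by rw [hpow2]; ring
  -- stirling sequence identity
  have hstR : (n.factorial : ℝ) = Stirling.stirlingSeq n * (Real.sqrt (2*n) * ((n:ℝ)/Real.exp 1)^n) := by
    rw [Stirling.stirlingSeq, div_mul_cancel₀]
    positivity
  have hstC : (n.factorial : ℂ) = ((Stirling.stirlingSeq n : ℝ):ℂ) * ((Real.sqrt (2*(n:ℝ)) : ℝ):ℂ) * ((n:ℂ)/ec)^n := by
    rw [hec]
    calc (n.factorial : ℂ) = (((n.factorial : ℝ) : ℝ) : ℂ) := by push_cast; ring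
      _ = _ := by
        rw [hstR]
        push_cast
        ring
  have hq : ((Real.sqrt (2*(n:ℝ)) : ℝ):ℂ) = 2 * s := by
    rw [hs, show (2*(n:ℝ)) = 4 * ((n:ℝ)/2) by ring]
    rw [show (4:ℝ) = 2^2 by norm_num, Real.sqrt_mul (by positivity), Real.sqrt_sq (by norm_num)]
    push_cast
    ring
  have hfac : ((n-1).factorial : ℂ) * (n:ℂ) = (n.factorial : ℂ) := by
    have : (n-1).factorial * n = n.factorial := by
      rw [mul_comm]
      exact Nat.mul_factorial_pred (by omega)
    exact_mod_cast this
  have hEn : ((n:ℂ)/ec)^n = ((n:ℂ)/(4*ec))^n * t * t := by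
    rw [ht, show ((n:ℂ)/(4*ec))^n * (2:ℂ)^n * (2:ℂ)^n = (((n:ℂ)/(4*ec)) * 2 * 2)^n by rw [mul_pow, mul_pow],
      show ((n:ℂ)/(4*ec)) * 2 * 2 = (n:ℂ)/ec by field_simp; ring]
  have hpi : ((Real.pi : ℝ):ℂ) = p * p := by
    rw [hp, ← Complex.ofReal_mul, Real.mul_self_sqrt hπ.le]
  -- final computation
  have hΓ2 : (Complex.Gamma ((n:ℂ)/2))^2 = ((n-1).factorial : ℂ) * 2 * p / (g * s * t) := by
    rw [eq_div_iff (by exact mul_ne_zero (mul_ne_zero hg0 hsne) htne), ← hkey]; ring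
  rw [hΓ2, hpi]
  rw [show ((n-1).factorial : ℂ) = (n.factorial:ℂ)/(n:ℂ) by rw [eq_div_iff hnC, hfac]]
  rw [hstC, hq, hEn]
  have hE4 : ((n:ℂ)/(4*ec))^n ≠ 0 := by
    apply pow_ne_zero
    simp only [ne_eq, div_eq_zero_iff]
    push_neg
    exact ⟨hnC, by simp [hecne]⟩
  set E4c := ((n:ℂ)/(4*ec))^n with hE4def
  clear_value ec p s t g E4c
  field_simp [hsne, hg0, hnC, hsqπ, htne, hE4]

end Stmt7Aux

open Stmt7Aux

/-- As `n → ∞`, `K_n / (2π·(n/(4e))^n·(n/2)^{u-1})` converges to `1`. -/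
theorem stmt_7 (a b c d : ℂ) (ha : 0 < a.re) (hb : 0 < b.re)
    (hc : c = conj a) (hd : d = conj b)
    (u : ℝ) (hu : u = (a + b).re) :
    Tendsto (fun n : ℕ =>
        Kseq a b c d u n /
          (2 * (Real.pi : ℂ) * ((n : ℂ) / (4 * (Real.exp 1 : ℂ))) ^ n *
            ((n : ℂ) / 2) ^ ((u : ℂ) - 1)))
      atTop (𝓝 1) := by
  set w1 : ℂ := 1/2 with hw1
  set w2 : ℂ := (2*(u:ℂ)-1)/2 with hw2
  set w3 : ℂ := (a+c)/2 with hw3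
  set w4 : ℂ := (a+d)/2 with hw4
  set w5 : ℂ := (b+c)/2 with hw5
  set w6 : ℂ := (b+d)/2 with hw6
  set v1 : ℂ := ((u:ℂ)-1/2)/2 with hv1
  set v2 : ℂ := (u:ℂ)/2 with hv2
  set v3 : ℂ := ((u:ℂ)+1/2)/2 with hv3
  have hsum : a + b + c + d = 2*(u:ℂ) := by
    rw [hc, hd, hu, show a + b + conj a + conj b = (a+b) + conj (a+b) by rw [map_add]; ring,
      Complex.add_conj]
    push_cast
    ring
  have he : w1+w2+w3+w4+w5+w6 = (v1+(v2+v2)+v3) + (((u:ℂ)-1) + 1) := by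
    rw [hw1, hw2, hw3, hw4, hw5, hw6, hv1, hv2, hv3]
    linear_combination hsum
  -- the model sequence
  have hGprod : Tendsto (fun n : ℕ =>
      (gratio w1 n * gratio w2 n * gratio w3 n * gratio w4 n * gratio w5 n * gratio w6 n) /
        (gratio v1 n * gratio v2 n ^ 2 * gratio v3 n)) atTop (𝓝 1) := by
    have hnum := ((((((gratio_tendsto w1).mul (gratio_tendsto w2)).mul
      (gratio_tendsto w3)).mul (gratio_tendsto w4)).mul
      (gratio_tendsto w5)).mul (gratio_tendsto w6))
    have hden := ((gratio_tendsto v1).mul ((gratio_tendsto v2).pow 2)).mul (gratio_tendsto v3)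
    have := hnum.div hden (by norm_num)
    simpa only [one_mul, mul_one, one_pow, div_one, Pi.div_def] using this
  have hM := hGprod.mul stirling_part
  rw [mul_one] at hM
  refine Tendsto.congr' ?_ hM
  filter_upwards [eventually_ge_atTop 1, ev_gratio_ne v1, ev_gratio_ne v2, ev_gratio_ne v3]
    with n hn1 hgv1 hgv2 hgv3
  have hnR : (0:ℝ) < (n:ℝ) := by exact_mod_cast Nat.lt_of_lt_of_le Nat.zero_lt_one hn1
  have hnC : ((n:ℂ)) ≠ 0 := by exact_mod_cast hnR.ne'
  have hrC : ((n:ℂ)/2) ≠ 0 := by simp [hnC]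
  have hnre : 0 < ((n:ℂ)/2).re := by rw [nhalf_re]; linarith
  have hΓr : Complex.Gamma ((n:ℂ)/2) ≠ 0 := Gamma_ne_zero_of_re_pos' hnre
  have hcp : ∀ x : ℂ, ((n:ℂ)/2) ^ x ≠ 0 := by
    intro x h
    exact hrC ((cpow_eq_zero_iff _ _).mp h).1
  have hsub : ∀ x : ℂ, Complex.Gamma ((n:ℂ)/2 + x)
      = gratio x n * (Complex.Gamma ((n:ℂ)/2) * ((n:ℂ)/2) ^ x) := by
    intro x
    rw [gratio, div_mul_cancel₀]
    exact mul_ne_zero hΓr (hcp x)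
  have hπ : ((Real.pi : ℝ):ℂ) ≠ 0 := by
    exact_mod_cast Real.pi_pos.ne'
  have hec : ((Real.exp 1 : ℝ):ℂ) ≠ 0 := by
    exact_mod_cast (Real.exp_pos 1).ne'
  have htne : ((2:ℂ)^n) ≠ 0 := pow_ne_zero _ two_ne_zero
  have hE4 : ((n:ℂ)/(4*(Real.exp 1:ℂ)))^n ≠ 0 := by
    apply pow_ne_zero
    simp only [ne_eq, div_eq_zero_iff]
    push_neg
    exact ⟨hnC, by simp [hec]⟩
  -- rewrite Kseq in shifted form
  have hpowid : ((n:ℂ)/2)^w1 * ((n:ℂ)/2)^w2 * ((n:ℂ)/2)^w3 * ((n:ℂ)/2)^w4 *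
      ((n:ℂ)/2)^w5 * ((n:ℂ)/2)^w6
      = (((n:ℂ)/2)^v1 * (((n:ℂ)/2)^v2 * ((n:ℂ)/2)^v2) * ((n:ℂ)/2)^v3) *
        (((n:ℂ)/2)^((u:ℂ)-1) * ((n:ℂ)/2)) := by
    have h := congrArg (fun z => ((n:ℂ)/2) ^ z) he
    simp only [cpow_add _ _ hrC, cpow_one] at h
    linear_combination h
  have hK : Kseq a b c d u n =
      (gratio w1 n * gratio w2 n * gratio w3 n * gratio w4 n * gratio w5 n * gratio w6 n) *
        (Complex.Gamma ((n:ℂ)/2))^6 *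
        (((n:ℂ)/2)^w1 * ((n:ℂ)/2)^w2 * ((n:ℂ)/2)^w3 * ((n:ℂ)/2)^w4 *
          ((n:ℂ)/2)^w5 * ((n:ℂ)/2)^w6) /
      ((2:ℂ)^n * ((gratio v1 n * gratio v2 n ^ 2 * gratio v3 n) *
        (Complex.Gamma ((n:ℂ)/2))^4 *
        (((n:ℂ)/2)^v1 * (((n:ℂ)/2)^v2 * ((n:ℂ)/2)^v2) * ((n:ℂ)/2)^v3))) := by
    rw [Kseq,
      show (((n : ℂ) + 1) / 2) = (n:ℂ)/2 + w1 by rw [hw1]; ring,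
      show (((n : ℂ) + 2 * (u:ℂ) - 1) / 2) = (n:ℂ)/2 + w2 by rw [hw2]; ring,
      show (((n : ℂ) + a + c) / 2) = (n:ℂ)/2 + w3 by rw [hw3]; ring,
      show (((n : ℂ) + a + d) / 2) = (n:ℂ)/2 + w4 by rw [hw4]; ring,
      show (((n : ℂ) + b + c) / 2) = (n:ℂ)/2 + w5 by rw [hw5]; ring,
      show (((n : ℂ) + b + d) / 2) = (n:ℂ)/2 + w6 by rw [hw6]; ring,
      show (((n : ℂ) + (u:ℂ) - 1/2) / 2) = (n:ℂ)/2 + v1 by rw [hv1]; ring,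
      show (((n : ℂ) + (u:ℂ)) / 2) = (n:ℂ)/2 + v2 by rw [hv2]; ring,
      show (((n : ℂ) + (u:ℂ) + 1/2) / 2) = (n:ℂ)/2 + v3 by rw [hv3]; ring,
      hsub w1, hsub w2, hsub w3, hsub w4, hsub w5, hsub w6, hsub v1, hsub v2, hsub v3]
    ring
  rw [eq_comm, hK, hpowid]
  set G := Complex.Gamma ((n:ℂ)/2) with hG
  set P1 := ((n:ℂ)/2)^v1 with hP1
  set P2 := ((n:ℂ)/2)^v2 with hP2
  set P3 := ((n:ℂ)/2)^v3 with hP3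
  set PU := ((n:ℂ)/2)^((u:ℂ)-1) with hPU
  set Q1 := ((n:ℂ)/2)^w1 with hQ1
  set Q2 := ((n:ℂ)/2)^w2 with hQ2
  set Q3 := ((n:ℂ)/2)^w3 with hQ3
  set Q4 := ((n:ℂ)/2)^w4 with hQ4
  set Q5 := ((n:ℂ)/2)^w5 with hQ5
  set Q6 := ((n:ℂ)/2)^w6 with hQ6
  set tC := (2:ℂ)^n with htC
  set E4 := ((n:ℂ)/(4*(Real.exp 1:ℂ)))^n with hE4def
  have hP1n := hcp v1
  have hP2n := hcp v2
  have hP3n := hcp v3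
  have hPUn := hcp ((u:ℂ)-1)
  rw [← hP1, ← hP2, ← hP3, ← hPU] at *
  clear_value w1 w2 w3 w4 w5 w6 v1 v2 v3 G P1 P2 P3 PU Q1 Q2 Q3 Q4 Q5 Q6 tC E4
  field_simp [hΓr, hP1n, hP2n, hP3n, hPUn, htne, hE4, hπ, hgv1, hgv2, hgv3, hnC]
end
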